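/- arXiv:2101.07863 — 4 statements merged into one kernel-verified Lean document; each statement's English description precedes it below -/
import Mathlib

section
/- Let {Xⱼ : j ≥ 1} be independent random variables with Σⱼ E|Xⱼ| < ∞, each Xⱼ subgaussian with variance factor νⱼ, and ν = Σⱼ νⱼ < ∞. Then the L²-limit S of the series Σⱼ Xⱼ is subgaussian with variance factor 8ν, i.e., log E[exp(λ(S − E[S]))] ≤ 4νλ² for all λ ∈ ℝ. -/
/-!
The centred partial sums `∑_{j<n} (X j - E X j)` are subgaussian with variance factor
`∑_{j<n} ν j ≤ V`, because moment generating functions of independent variables multiply.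
Convergence in `L²` controls both the partial sums and their means, so the centred partial sums
converge in measure to `S - E S`. Along an a.e. convergent subsequence, Fatou's lemma carries the
bound `E exp (t (S - E S)) ≤ exp (V t² / 2)` over to the limit.
-/

open MeasureTheory ProbabilityTheory Real Filter

open scoped NNReal ENNReal Topology

namespace ProbabilityTheory.HasSubgaussianMGF

variable {Ω : Type*} {mΩ : MeasurableSpace Ω} {μ : Measure Ω} {X : Ω → ℝ} {c d : ℝ≥0}

lemma mono (h : HasSubgaussianMGF X c μ) (hcd : c ≤ d) : HasSubgaussianMGF X d μ :=
  ⟨h.integrable_exp_mul, fun t => (h.mgf_le t).trans (exp_le_exp.2 (by gcongr))⟩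

lemma lintegral_exp_mul_le (h : HasSubgaussianMGF X c μ) (t : ℝ) :
    ∫⁻ ω, ENNReal.ofReal (exp (t * X ω)) ∂μ ≤ ENNReal.ofReal (exp (c * t ^ 2 / 2)) := by
  rw [← ofReal_integral_eq_lintegral_ofReal (h.integrable_exp_mul t)
    (ae_of_all _ fun ω => (exp_pos _).le)]
  exact ENNReal.ofReal_le_ofReal (h.mgf_le t)

lemma of_cgf_le [NeZero μ] (hint : ∀ t, Integrable (fun ω => exp (t * X ω)) μ)
    (hcgf : ∀ t, cgf X μ t ≤ c * t ^ 2 / 2) : HasSubgaussianMGF X c μ :=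
  ⟨hint, fun t => (log_le_iff_le_exp (mgf_pos' (NeZero.ne μ) (hint t))).1 (hcgf t)⟩

lemma of_tendsto_ae {ι : Type*} {l : Filter ι} [l.NeBot] [l.IsCountablyGenerated]
    {Y : ι → Ω → ℝ} (hY : ∀ i, HasSubgaussianMGF (Y i) c μ)
    (hlim : ∀ᵐ ω ∂μ, Tendsto (fun i => Y i ω) l (𝓝 (X ω))) :
    HasSubgaussianMGF X c μ := by
  have hX : AEStronglyMeasurable X μ :=
    aestronglyMeasurable_of_tendsto_ae l (fun i => (hY i).aestronglyMeasurable) hlim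
  have hexp : ∀ t, AEStronglyMeasurable (fun ω => exp (t * X ω)) μ := fun t =>
    continuous_exp.comp_aestronglyMeasurable (hX.const_mul t)
  have hlintegral : ∀ t, ∫⁻ ω, ENNReal.ofReal (exp (t * X ω)) ∂μ
      ≤ ENNReal.ofReal (exp (c * t ^ 2 / 2)) := fun t =>
    calc ∫⁻ ω, ENNReal.ofReal (exp (t * X ω)) ∂μ
        = ∫⁻ ω, liminf (fun i => ENNReal.ofReal (exp (t * Y i ω))) l ∂μ := by
          refine lintegral_congr_ae ?_
          filter_upwards [hlim] with ω hω
          exact (((ENNReal.continuous_ofReal.comp continuous_exp).comp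
            (continuous_const_mul t)).tendsto _ |>.comp hω).liminf_eq.symm
      _ ≤ liminf (fun i => ∫⁻ ω, ENNReal.ofReal (exp (t * Y i ω)) ∂μ) l :=
          lintegral_liminf_le' fun i => ((hY i).integrable_exp_mul t).1.aemeasurable.ennreal_ofReal
      _ ≤ ENNReal.ofReal (exp (c * t ^ 2 / 2)) :=
          liminf_le_of_frequently_le' (Frequently.of_forall fun i => (hY i).lintegral_exp_mul_le t)
  have hint : ∀ t, Integrable (fun ω => exp (t * X ω)) μ := fun t =>
    ⟨hexp t, (hasFiniteIntegral_iff_ofReal (ae_of_all _ fun ω => (exp_pos _).le)).2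
      ((hlintegral t).trans_lt ENNReal.ofReal_lt_top)⟩
  refine ⟨hint, fun t => ?_⟩
  rw [mgf, integral_eq_lintegral_of_nonneg_ae (ae_of_all _ fun ω => (exp_pos _).le) (hexp t)]
  exact ENNReal.toReal_le_of_le_ofReal (exp_pos _).le (hlintegral t)

lemma of_tendstoInMeasure {ι : Type*} {l : Filter ι} [l.NeBot] [l.IsCountablyGenerated]
    {Y : ι → Ω → ℝ} (hY : ∀ i, HasSubgaussianMGF (Y i) c μ)
    (hlim : TendstoInMeasure μ Y l X) : HasSubgaussianMGF X c μ := by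
  obtain ⟨ns, -, hns⟩ := hlim.exists_seq_tendsto_ae'
  exact of_tendsto_ae (fun k => hY (ns k)) hns

end ProbabilityTheory.HasSubgaussianMGF

lemma MeasureTheory.TendstoInMeasure.sub_tendsto_const {α ι E : Type*} {m : MeasurableSpace α}
    {μ : Measure α} [SeminormedAddCommGroup E] {l : Filter ι} {f : ι → α → E} {g : α → E}
    {c : ι → E} {d : E} (hf : TendstoInMeasure μ f l g) (hc : Tendsto c l (𝓝 d)) :
    TendstoInMeasure μ (fun i ω => f i ω - c i) l (fun ω => g ω - d) := by
  rw [tendstoInMeasure_iff_dist] at hf ⊢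
  intro ε hε
  refine tendsto_of_tendsto_of_tendsto_of_le_of_le' tendsto_const_nhds (hf (ε / 2) (half_pos hε))
    (.of_forall fun _ => zero_le) ?_
  filter_upwards [Metric.tendsto_nhds.1 hc (ε / 2) (half_pos hε)] with i hi
  refine measure_mono fun ω (hω : ε ≤ _) => ?_
  show ε / 2 ≤ dist (f i ω) (g ω)
  linarith [dist_sub_sub_le (f i ω) (c i) (g ω) d]

lemma MeasureTheory.tendsto_integral_of_tendsto_eLpNorm {α ι : Type*} {m : MeasurableSpace α}
    {μ : Measure α} [IsProbabilityMeasure μ] {l : Filter ι} {p : ℝ≥0∞} (hp : 1 ≤ p)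
    {f : ι → α → ℝ} {g : α → ℝ} (hf : ∀ i, Integrable (f i) μ) (hg : AEStronglyMeasurable g μ)
    (hfg : Tendsto (fun i => eLpNorm (f i - g) p μ) l (𝓝 0)) :
    Tendsto (fun i => ∫ ω, f i ω ∂μ) l (𝓝 (∫ ω, g ω ∂μ)) :=
  tendsto_integral_of_L1' g hg (Eventually.of_forall hf) <|
    tendsto_of_tendsto_of_tendsto_of_le_of_le tendsto_const_nhds hfg (fun _ => zero_le)
      fun i => eLpNorm_le_eLpNorm_of_exponent_le hp ((hf i).1.sub hg)

theorem series_limit_subgaussian_general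
    {Ω : Type*} [MeasureSpace Ω] [IsProbabilityMeasure (ℙ : Measure Ω)]
    (X : ℕ → Ω → ℝ) (ν : ℕ → ℝ) (V : ℝ)
    (hind : iIndepFun X ℙ)
    (hint : ∀ j, Integrable (X j) ℙ)
    (hν : ∀ j, 0 < ν j)
    (hmgf : ∀ j, ∀ l : ℝ,
      Integrable (fun ω => exp (l * (X j ω - ∫ x, X j x ∂ℙ))) ℙ)
    (hsub : ∀ j, ∀ l : ℝ,
      log (∫ ω, exp (l * (X j ω - ∫ x, X j x ∂ℙ)) ∂ℙ) ≤ l ^ 2 * ν j / 2)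
    (hVsum : HasSum ν V)
    (S : Ω → ℝ) (hS : MemLp S 2 ℙ)
    (hlim : Tendsto (fun n =>
      eLpNorm (fun ω => (∑ j ∈ Finset.range n, X j ω) - S ω) 2 ℙ) atTop (nhds 0)) :
    ∀ l : ℝ,
      log (∫ ω, exp (l * (S ω - ∫ x, S x ∂ℙ)) ∂ℙ) ≤ 4 * V * l ^ 2 := by
  have hV : 0 ≤ V := hVsum.nonneg fun j => (hν j).le
  let c : ℕ → ℝ≥0 := fun j => ⟨ν j, (hν j).le⟩
  let m : ℕ → ℝ := fun j => ∫ x, X j x ∂ℙ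
  have hcentered (j : ℕ) : HasSubgaussianMGF (fun ω => X j ω - m j) (c j) ℙ :=
    .of_cgf_le (hmgf j) fun l => (hsub j l).trans_eq (by change _ = ν j * l ^ 2 / 2; ring)
  have hpartial (n : ℕ) : HasSubgaussianMGF
      (fun ω => ∑ j ∈ Finset.range n, X j ω - ∑ j ∈ Finset.range n, m j) (⟨V, hV⟩ : ℝ≥0) ℙ := by
    refine (HasSubgaussianMGF.sum_of_iIndepFun
      (hind.comp (fun j x => x - m j) fun j => measurable_id.sub_const _)
      fun j _ => hcentered j).mono ?_ |>.congr (ae_of_all _ fun ω => Finset.sum_sub_distrib ..)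
    refine NNReal.coe_le_coe.1 ?_
    rw [NNReal.coe_sum]
    exact sum_le_hasSum _ (fun j _ => (hν j).le) hVsum
  have hsum_int (n : ℕ) : Integrable (fun ω => ∑ j ∈ Finset.range n, X j ω) ℙ :=
    integrable_finsetSum _ fun j _ => hint j
  have hmeans : Tendsto (fun n => ∑ j ∈ Finset.range n, m j) atTop (𝓝 (∫ x, S x ∂ℙ)) := by
    simp only [m, ← integral_finsetSum _ fun j _ => hint j]
    exact tendsto_integral_of_tendsto_eLpNorm one_le_two hsum_int hS.1 hlim
  have hconv : TendstoInMeasure ℙ (fun n ω => ∑ j ∈ Finset.range n, X j ω) atTop S :=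
    tendstoInMeasure_of_tendsto_eLpNorm two_ne_zero (fun n => (hsum_int n).1) hS.1 hlim
  intro l
  calc _ ≤ V * l ^ 2 / 2 :=
        (HasSubgaussianMGF.of_tendstoInMeasure hpartial (hconv.sub_tendsto_const hmeans)).cgf_le l
    _ ≤ 4 * V * l ^ 2 := by nlinarith [mul_nonneg hV (sq_nonneg l)]

/-- The `L²`-limit `S` of a series of independent subgaussian random variables with
summable means and summable variance factors `ν = Σ νⱼ` is subgaussian with variance
factor `8ν`: `log E[exp (l (S - E S))] ≤ 4 ν l²` for all real `l`. -/
theorem series_limit_subgaussian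
    {Ω : Type*} [MeasureSpace Ω] [IsProbabilityMeasure (ℙ : Measure Ω)]
    (X : ℕ → Ω → ℝ) (ν : ℕ → ℝ) (V : ℝ)
    (hind : iIndepFun X ℙ)
    (hint : ∀ j, Integrable (X j) ℙ)
    (habs : Summable (fun j => ∫ ω, |X j ω| ∂ℙ))
    (hν : ∀ j, 0 < ν j)
    (hmgf : ∀ j, ∀ l : ℝ,
      Integrable (fun ω => exp (l * (X j ω - ∫ x, X j x ∂ℙ))) ℙ)
    (hsub : ∀ j, ∀ l : ℝ,
      log (∫ ω, exp (l * (X j ω - ∫ x, X j x ∂ℙ)) ∂ℙ) ≤ l ^ 2 * ν j / 2)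
    (hVsum : HasSum ν V)
    (S : Ω → ℝ) (hS : MemLp S 2 ℙ)
    (hlim : Tendsto (fun n =>
      eLpNorm (fun ω => (∑ j ∈ Finset.range n, X j ω) - S ω) 2 ℙ) atTop (nhds 0)) :
    ∀ l : ℝ,
      log (∫ ω, exp (l * (S ω - ∫ x, S x ∂ℙ)) ∂ℙ) ≤ 4 * V * l ^ 2 :=
  series_limit_subgaussian_general X ν V hind hint hν hmgf hsub hVsum S hS hlim
end

section
/- If a centered random variable Y satisfies E[Y^{2k}] ≤ k! C^k for every integer k ≥ 1 (with C > 0), then Y is subgaussian with variance factor 4C, i.e., log E[exp(λY)] ≤ 2Cλ² for all λ ∈ ℝ. -/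
open MeasureTheory ProbabilityTheory Real

/-! Expanding `exp (a Y²)` in its power series and bounding the moments term by term gives
`E[exp (a Y²)] ≤ ∑ (a C)ᵏ = (1 - a C)⁻¹` for `0 ≤ a C < 1`. If `C l² ≤ 1/2`, integrate
`exp x ≤ x + exp x²` at `x = l Y`: the linear term vanishes since `Y` is centered, so
`E[exp (l Y)] ≤ (1 - C l²)⁻¹`, and `log (1 - u)⁻¹ ≤ 2u` for `u ≤ 1/2`. If `C l² > 1/2`, integrate
`l y ≤ C l² + y²/(4C)` instead: `E[exp (l Y)] ≤ exp (C l²) (1 - 1/4)⁻¹`, and `log (4/3) ≤ 1/3 < C l²`. -/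

namespace Real

lemma exp_le_add_exp_sq (x : ℝ) : exp x ≤ x + exp (x ^ 2) := by
  have hsq : x ^ 2 + 1 ≤ exp (x ^ 2) := add_one_le_exp _
  rcases le_or_gt |x| 1 with hx | hx
  · have := (abs_le.1 (abs_exp_sub_one_sub_id_le hx)).2
    linarith
  · rcases lt_abs.1 hx with hx | hx
    · have : exp x ≤ exp (x ^ 2) := exp_le_exp.2 (by nlinarith)
      linarith
    · have : exp x ≤ 1 := exp_le_one_iff.2 (by linarith)
      nlinarith

lemma exp_mul_le_exp_mul_sq_mul_exp {C : ℝ} (hC : 0 < C) (l y : ℝ) :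
    exp (l * y) ≤ exp (C * l ^ 2) * exp ((4 * C)⁻¹ * y ^ 2) := by
  rw [← exp_add, exp_le_exp, ← sub_nonneg]
  have hsq : C * l ^ 2 + (4 * C)⁻¹ * y ^ 2 - l * y = (4 * C)⁻¹ * (y - 2 * C * l) ^ 2 := by
    field_simp
    ring
  rw [hsq]
  positivity

lemma log_inv_one_sub_le_two_mul {u : ℝ} (hu₀ : 0 ≤ u) (hu : u ≤ 1 / 2) :
    log (1 - u)⁻¹ ≤ 2 * u := by
  have hpos : 0 < 1 - u := by linarith
  calc log (1 - u)⁻¹ ≤ (1 - u)⁻¹ - 1 := log_le_sub_one_of_pos (inv_pos.2 hpos)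
    _ ≤ 2 * u := by
      rw [sub_le_iff_le_add, inv_le_iff_one_le_mul₀ hpos]
      nlinarith

end Real

section

variable {Ω : Type*} [MeasurableSpace Ω]

def FactorialEvenMomentBound (Y : Ω → ℝ) (C : ℝ) (μ : Measure Ω) : Prop :=
  ∀ k : ℕ, 1 ≤ k →
    Integrable (fun ω => Y ω ^ (2 * k)) μ ∧ ∫ ω, Y ω ^ (2 * k) ∂μ ≤ k.factorial * C ^ k

variable {μ : Measure Ω} {Y : Ω → ℝ} {C a : ℝ}

namespace FactorialEvenMomentBound

lemma aemeasurable_sq (h : FactorialEvenMomentBound Y C μ) :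
    AEMeasurable (fun ω => Y ω ^ 2) μ := by
  simpa using (h 1 le_rfl).1.aemeasurable

variable [IsProbabilityMeasure μ]

lemma lintegral_pow_div_factorial_le (h : FactorialEvenMomentBound Y C μ) (ha : 0 ≤ a) (k : ℕ) :
    ∫⁻ ω, ENNReal.ofReal ((a * Y ω ^ 2) ^ k / k.factorial) ∂μ ≤ ENNReal.ofReal ((a * C) ^ k) := by
  rcases Nat.eq_zero_or_pos k with rfl | hk
  · simp
  obtain ⟨hint, hmom⟩ := h k hk
  have hcoef : 0 ≤ a ^ k / k.factorial := by positivity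
  have hterm : ∀ ω, (a * Y ω ^ 2) ^ k / k.factorial = a ^ k / k.factorial * Y ω ^ (2 * k) := by
    intro ω
    rw [mul_pow, ← pow_mul]
    ring
  simp_rw [hterm]
  rw [← ofReal_integral_eq_lintegral_ofReal (hint.const_mul _)
    (ae_of_all _ fun ω => mul_nonneg hcoef ((even_two_mul k).pow_nonneg (Y ω))),
    integral_const_mul]
  refine ENNReal.ofReal_le_ofReal ((mul_le_mul_of_nonneg_left hmom hcoef).trans_eq ?_)
  field_simp
  ring

lemma lintegral_exp_mul_sq_le (h : FactorialEvenMomentBound Y C μ) (hC : 0 ≤ C) (ha : 0 ≤ a)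
    (haC : a * C < 1) :
    ∫⁻ ω, ENNReal.ofReal (exp (a * Y ω ^ 2)) ∂μ ≤ ENNReal.ofReal (1 - a * C)⁻¹ := by
  have haC₀ : 0 ≤ a * C := mul_nonneg ha hC
  calc ∫⁻ ω, ENNReal.ofReal (exp (a * Y ω ^ 2)) ∂μ
      = ∑' k : ℕ, ∫⁻ ω, ENNReal.ofReal ((a * Y ω ^ 2) ^ k / k.factorial) ∂μ := by
        rw [← lintegral_tsum fun k =>
          ((h.aemeasurable_sq.const_mul a).pow_const k).div_const _ |>.ennreal_ofReal]
        refine lintegral_congr fun ω => ?_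
        rw [exp_eq_exp_ℝ, NormedSpace.exp_eq_tsum_div]
        exact ENNReal.ofReal_tsum_of_nonneg (fun k => by positivity)
          (summable_pow_div_factorial _)
    _ ≤ ∑' k : ℕ, ENNReal.ofReal ((a * C) ^ k) :=
        ENNReal.tsum_le_tsum (h.lintegral_pow_div_factorial_le ha)
    _ = ENNReal.ofReal (1 - a * C)⁻¹ := by
        rw [← ENNReal.ofReal_tsum_of_nonneg (fun k => pow_nonneg haC₀ k)
          (summable_geometric_of_lt_one haC₀ haC), tsum_geometric_of_lt_one haC₀ haC]

lemma integrable_exp_mul_sq (h : FactorialEvenMomentBound Y C μ) (hC : 0 ≤ C) (ha : 0 ≤ a)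
    (haC : a * C < 1) : Integrable (fun ω => exp (a * Y ω ^ 2)) μ :=
  ⟨(h.aemeasurable_sq.const_mul a).exp.aestronglyMeasurable,
    (hasFiniteIntegral_iff_ofReal (ae_of_all _ fun _ => (exp_pos _).le)).2
      ((h.lintegral_exp_mul_sq_le hC ha haC).trans_lt ENNReal.ofReal_lt_top)⟩

lemma integral_exp_mul_sq_le (h : FactorialEvenMomentBound Y C μ) (hC : 0 ≤ C) (ha : 0 ≤ a)
    (haC : a * C < 1) : ∫ ω, exp (a * Y ω ^ 2) ∂μ ≤ (1 - a * C)⁻¹ := by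
  rw [integral_eq_lintegral_of_nonneg_ae (ae_of_all _ fun _ => (exp_pos _).le)
    (h.integrable_exp_mul_sq hC ha haC).aestronglyMeasurable]
  exact ENNReal.toReal_le_of_le_ofReal (inv_nonneg.2 (by linarith))
    (h.lintegral_exp_mul_sq_le hC ha haC)

lemma integrable_exp_mul (h : FactorialEvenMomentBound Y C μ) (hC : 0 < C)
    (hY : AEMeasurable Y μ) (l : ℝ) : Integrable (fun ω => exp (l * Y ω)) μ := by
  have hquarter : (4 * C)⁻¹ * C < 1 := by
    rw [inv_mul_lt_iff₀ (by positivity)]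
    linarith
  refine ((h.integrable_exp_mul_sq hC.le (by positivity) hquarter).const_mul (exp (C * l ^ 2))).mono'
    (hY.const_mul l).exp.aestronglyMeasurable (ae_of_all _ fun ω => ?_)
  rw [norm_of_nonneg (exp_pos _).le]
  exact exp_mul_le_exp_mul_sq_mul_exp hC l (Y ω)

lemma integral_exp_mul_le_inv_one_sub (h : FactorialEvenMomentBound Y C μ) (hC : 0 ≤ C)
    (hY : Integrable Y μ) (hcen : ∫ ω, Y ω ∂μ = 0) {l : ℝ} (hl : l ^ 2 * C < 1) :
    ∫ ω, exp (l * Y ω) ∂μ ≤ (1 - l ^ 2 * C)⁻¹ := by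
  have hsq := h.integrable_exp_mul_sq hC (sq_nonneg l) hl
  calc ∫ ω, exp (l * Y ω) ∂μ ≤ ∫ ω, (l * Y ω + exp (l ^ 2 * Y ω ^ 2)) ∂μ := by
        refine integral_mono_of_nonneg (ae_of_all _ fun _ => (exp_pos _).le)
          ((hY.const_mul l).add hsq) (ae_of_all _ fun ω => ?_)
        simpa only [mul_pow] using exp_le_add_exp_sq (l * Y ω)
    _ = ∫ ω, exp (l ^ 2 * Y ω ^ 2) ∂μ := by
        rw [integral_add (hY.const_mul l) hsq, integral_const_mul, hcen, mul_zero, zero_add]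
    _ ≤ (1 - l ^ 2 * C)⁻¹ := h.integral_exp_mul_sq_le hC (sq_nonneg l) hl

lemma integral_exp_mul_le_exp_mul (h : FactorialEvenMomentBound Y C μ) (hC : 0 < C)
    (hY : AEMeasurable Y μ) (l : ℝ) :
    ∫ ω, exp (l * Y ω) ∂μ ≤ exp (C * l ^ 2) * (4 / 3) := by
  have hquarter : (4 * C)⁻¹ * C = 1 / 4 := by field_simp
  calc ∫ ω, exp (l * Y ω) ∂μ ≤ ∫ ω, exp (C * l ^ 2) * exp ((4 * C)⁻¹ * Y ω ^ 2) ∂μ :=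
        integral_mono (h.integrable_exp_mul hC hY l)
          ((h.integrable_exp_mul_sq hC.le (by positivity) (by linarith)).const_mul _)
          fun ω => exp_mul_le_exp_mul_sq_mul_exp hC l (Y ω)
    _ ≤ exp (C * l ^ 2) * (1 - (4 * C)⁻¹ * C)⁻¹ := by
        rw [integral_const_mul]
        gcongr
        exact h.integral_exp_mul_sq_le hC.le (by positivity) (by linarith)
    _ = exp (C * l ^ 2) * (4 / 3) := by
        rw [hquarter]
        norm_num

end FactorialEvenMomentBound

end

/-- Theorem 2.1 of Boucheron–Lugosi–Massart: a centered random variable `Y` with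
`E[Y^(2k)] ≤ k! C^k` for all integers `k ≥ 1` is subgaussian with variance factor `4C`,
that is, `log E[exp (l Y)] ≤ 2 C l²` for all real `l`. -/
theorem moments_imply_subgaussian
    {Ω : Type*} [MeasureSpace Ω] [IsProbabilityMeasure (ℙ : Measure Ω)]
    (Y : Ω → ℝ) (hY : Integrable Y ℙ) (hcen : ∫ ω, Y ω ∂ℙ = 0)
    (C : ℝ) (hC : 0 < C)
    (hintm : ∀ k : ℕ, 1 ≤ k → Integrable (fun ω => (Y ω) ^ (2 * k)) ℙ)
    (hmom : ∀ k : ℕ, 1 ≤ k →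
      ∫ ω, (Y ω) ^ (2 * k) ∂ℙ ≤ (k.factorial : ℝ) * C ^ k) :
    ∀ l : ℝ,
      Integrable (fun ω => exp (l * Y ω)) ℙ ∧
      log (∫ ω, exp (l * Y ω) ∂ℙ) ≤ 2 * C * l ^ 2 := by
  intro l
  have h : FactorialEvenMomentBound Y C ℙ := fun k hk => ⟨hintm k hk, hmom k hk⟩
  have hint := h.integrable_exp_mul hC hY.aemeasurable l
  refine ⟨hint, ?_⟩
  have hpos := integral_exp_pos hint
  rcases le_or_gt (C * l ^ 2) (1 / 2) with hsmall | hlarge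
  · calc log (∫ ω, exp (l * Y ω) ∂ℙ) ≤ log (1 - l ^ 2 * C)⁻¹ :=
          log_le_log hpos (h.integral_exp_mul_le_inv_one_sub hC.le hY hcen (by linarith))
      _ ≤ 2 * (l ^ 2 * C) := log_inv_one_sub_le_two_mul (by positivity) (by linarith)
      _ = 2 * C * l ^ 2 := by ring
  · have hlog : log (4 / 3 : ℝ) ≤ 1 / 3 := by
      linarith [log_le_sub_one_of_pos (by norm_num : (0 : ℝ) < 4 / 3)]
    calc log (∫ ω, exp (l * Y ω) ∂ℙ) ≤ log (exp (C * l ^ 2) * (4 / 3)) :=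
          log_le_log hpos (h.integral_exp_mul_le_exp_mul hC hY.aemeasurable l)
      _ = C * l ^ 2 + log (4 / 3) := by rw [log_mul (exp_pos _).ne' (by norm_num), log_exp]
      _ ≤ 2 * C * l ^ 2 := by linarith
end

section
/- Let ψ : ℝ → ℝ satisfy |ψ(x)| ≤ C(1 + |x|)^{−1−ε}. Then there is a constant C' such that for all x ≠ y, Σ_{I ∈ 𝒟} |ψ_I(x)|²|ψ_I(y)|² ≤ C'/|x − y|². -/
/-!
With `s = 2 + 2ε`, the decay of `ψ` bounds the `(j, k)` term by
`4^j C⁴ (1 + |2^j x - k|)^{-s} (1 + |2^j y - k|)^{-s}`. Since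
`1 + |a - b| ≤ 2 max (1 + |a - k|, 1 + |b - k|)`, the larger bracket can be traded for
`1 + |a - b|` and the smaller one summed over `k`, so scale `j` contributes
`≲ 4^j (1 + 2^j |x - y|)^{-s} = |x - y|^{-2} t² (1 + t)^{-s}` with `t = 2^j |x - y|`.
As `t² (1 + t)^{-s} ≤ min (t², t^{2-s})` and `s > 2`, the sum over `j` is dominated by two
geometric series, one on each side of the scale `2^{-j} ≈ |x - y|`.
-/

open Real

/-- The wavelet `ψ_I` associated to the dyadic interval `I = [k 2^{-j}, (k+1) 2^{-j})`:
`ψ_I(x) = 2^{j/2} ψ(2^j x - k)`. -/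
noncomputable def waveletDyadic (ψ : ℝ → ℝ) (j k : ℤ) (x : ℝ) : ℝ :=
  (2 : ℝ) ^ ((j : ℝ) / 2) * ψ ((2 : ℝ) ^ j * x - k)

theorem rpow_neg_le_two_rpow_mul_rpow_neg {p D s : ℝ} (hs : 0 ≤ s) (hD : 0 < D)
    (h : D ≤ 2 * p) : p ^ (-s) ≤ 2 ^ s * D ^ (-s) :=
  calc p ^ (-s) ≤ (D / 2) ^ (-s) :=
        rpow_le_rpow_of_nonpos (by positivity) (by linarith) (by linarith)
    _ = 2 ^ s * D ^ (-s) := by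
        rw [div_rpow hD.le zero_le_two, rpow_neg zero_le_two, div_eq_mul_inv, inv_inv, mul_comm]

theorem rpow_neg_mul_rpow_neg_le {p q D s : ℝ} (hs : 0 ≤ s) (hp : 0 < p) (hq : 0 < q)
    (hD : 0 < D) (h : D ≤ 2 * max p q) :
    p ^ (-s) * q ^ (-s) ≤ 2 ^ s * D ^ (-s) * (p ^ (-s) + q ^ (-s)) := by
  have hmax := rpow_neg_le_two_rpow_mul_rpow_neg hs hD h
  have hp' := rpow_nonneg hp.le (-s)
  have hq' := rpow_nonneg hq.le (-s)
  rcases le_total p q with hpq | hqp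
  · rw [max_eq_right hpq] at hmax
    nlinarith [mul_le_mul_of_nonneg_left hmax hp']
  · rw [max_eq_left hqp] at hmax
    nlinarith [mul_le_mul_of_nonneg_left hmax hq']

theorem one_add_abs_sub_le_two_mul_max (a b c : ℝ) :
    1 + |a - b| ≤ 2 * max (1 + |a - c|) (1 + |b - c|) := by
  linarith [abs_sub_le a c b, abs_sub_comm c b, le_max_left (1 + |a - c|) (1 + |b - c|),
    le_max_right (1 + |a - c|) (1 + |b - c|)]

theorem summable_one_add_abs_int_rpow {s : ℝ} (hs : 1 < s) :
    Summable fun k : ℤ => (1 + |(k : ℝ)|) ^ (-s) := by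
  refine (summable_abs_int_rpow hs).of_norm_bounded_eventually ?_
  filter_upwards [Set.Finite.compl_mem_cofinite (Set.finite_singleton (0 : ℤ))] with k hk
  have hk : 0 < |(k : ℝ)| := by simpa using hk
  rw [norm_of_nonneg (by positivity)]
  exact rpow_le_rpow_of_nonpos hk (by linarith) (by linarith)

theorem tsum_one_add_abs_sub_int_rpow_le {s : ℝ} (hs : 1 < s) (a : ℝ) :
    ∑' k : ℤ, ENNReal.ofReal ((1 + |a - k|) ^ (-s))
      ≤ ENNReal.ofReal (2 ^ s * ∑' k : ℤ, (1 + |(k : ℝ)|) ^ (-s)) := by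
  have hfloor (k : ℤ) : (1 + |a - k|) ^ (-s) ≤ 2 ^ s * (1 + |((⌊a⌋ - k : ℤ) : ℝ)|) ^ (-s) := by
    refine rpow_neg_le_two_rpow_mul_rpow_neg (by linarith) (by positivity) ?_
    have hdist : |((⌊a⌋ - k : ℤ) : ℝ)| ≤ |a - k| + 1 := by
      refine abs_le.mpr ⟨?_, ?_⟩ <;> push_cast <;>
        cases abs_cases (a - k) <;> linarith [Int.floor_le a, Int.lt_floor_add_one a]
    linarith [abs_nonneg (a - k)]
  rw [ENNReal.ofReal_mul (by positivity), ENNReal.ofReal_tsum_of_nonneg (fun _ => by positivity)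
    (summable_one_add_abs_int_rpow hs), ← ENNReal.tsum_mul_left,
    ← (Equiv.subLeft ⌊a⌋).tsum_eq
      (fun k : ℤ => ENNReal.ofReal (2 ^ s) * ENNReal.ofReal ((1 + |(k : ℝ)|) ^ (-s)))]
  refine ENNReal.tsum_le_tsum fun k => ?_
  rw [← ENNReal.ofReal_mul (by positivity)]
  exact ENNReal.ofReal_le_ofReal (hfloor k)

theorem exists_tsum_one_add_abs_sub_int_rpow_mul_le {s : ℝ} (hs : 1 < s) :
    ∃ K, 0 ≤ K ∧ ∀ a b : ℝ,
      ∑' k : ℤ, ENNReal.ofReal ((1 + |a - k|) ^ (-s) * (1 + |b - k|) ^ (-s))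
        ≤ ENNReal.ofReal (K * (1 + |a - b|) ^ (-s)) := by
  set T := 2 ^ s * ∑' k : ℤ, (1 + |(k : ℝ)|) ^ (-s)
  have hT : 0 ≤ T := by positivity
  refine ⟨2 ^ s * (2 * T), by positivity, fun a b => ?_⟩
  have hD : 0 ≤ 2 ^ s * (1 + |a - b|) ^ (-s) := by positivity
  calc ∑' k : ℤ, ENNReal.ofReal ((1 + |a - k|) ^ (-s) * (1 + |b - k|) ^ (-s))
      ≤ ∑' k : ℤ, ENNReal.ofReal (2 ^ s * (1 + |a - b|) ^ (-s)) *
          (ENNReal.ofReal ((1 + |a - k|) ^ (-s)) + ENNReal.ofReal ((1 + |b - k|) ^ (-s))) := by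
        refine ENNReal.tsum_le_tsum fun k => ?_
        rw [← ENNReal.ofReal_add (by positivity) (by positivity), ← ENNReal.ofReal_mul hD]
        exact ENNReal.ofReal_le_ofReal <| rpow_neg_mul_rpow_neg_le (by linarith) (by positivity)
          (by positivity) (by positivity) (one_add_abs_sub_le_two_mul_max a b k)
    _ ≤ ENNReal.ofReal (2 ^ s * (1 + |a - b|) ^ (-s)) * (ENNReal.ofReal T + ENNReal.ofReal T) := by
        rw [ENNReal.tsum_mul_left, ENNReal.tsum_add]
        gcongr <;> exact tsum_one_add_abs_sub_int_rpow_le hs _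
    _ = ENNReal.ofReal (2 ^ s * (2 * T) * (1 + |a - b|) ^ (-s)) := by
        rw [← ENNReal.ofReal_add hT hT, ← ENNReal.ofReal_mul hD]
        ring_nf

theorem tsum_ofReal_le_of_le_geometric {g : ℕ → ℝ} {r : ℝ} (hr₀ : 0 ≤ r) (hr₁ : r < 1)
    (hg : ∀ n, g n ≤ r ^ n) : ∑' n, ENNReal.ofReal (g n) ≤ ENNReal.ofReal (1 - r)⁻¹ := by
  rw [← tsum_geometric_of_lt_one hr₀ hr₁,
    ENNReal.ofReal_tsum_of_nonneg (fun n => by positivity) (summable_geometric_of_lt_one hr₀ hr₁)]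
  exact ENNReal.tsum_le_tsum fun n => ENNReal.ofReal_le_ofReal (hg n)

theorem rpow_neg_le_of_two_pow_le {x γ : ℝ} {n : ℕ} (hγ : 0 ≤ γ) (hx : 2 ^ n ≤ x) :
    x ^ (-γ) ≤ ((2 : ℝ) ^ (-γ)) ^ n :=
  calc x ^ (-γ) ≤ ((2 : ℝ) ^ n) ^ (-γ) :=
        rpow_le_rpow_of_nonpos (by positivity) hx (by linarith)
    _ = ((2 : ℝ) ^ (-γ)) ^ n := by
        rw [← rpow_natCast, ← rpow_natCast, ← rpow_mul zero_le_two, ← rpow_mul zero_le_two,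
          mul_comm]

theorem exists_tsum_ofReal_comp_two_zpow_mul_le {f : ℝ → ℝ} {α β : ℝ} (hα : 0 < α)
    (hβ : 0 < β) (hf₀ : ∀ t, 0 < t → f t ≤ t ^ α) (hf_inf : ∀ t, 0 < t → f t ≤ t ^ (-β)) :
    ∃ K, 0 ≤ K ∧ ∀ d, 0 < d → ∑' j : ℤ, ENNReal.ofReal (f (2 ^ j * d)) ≤ ENNReal.ofReal K := by
  have hr (γ : ℝ) (hγ : 0 < γ) : 0 ≤ (2 : ℝ) ^ (-γ) ∧ (2 : ℝ) ^ (-γ) < 1 :=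
    ⟨by positivity, rpow_lt_one_of_one_lt_of_neg one_lt_two (by linarith)⟩
  have hK (γ : ℝ) (hγ : 0 < γ) : 0 ≤ (1 - (2 : ℝ) ^ (-γ))⁻¹ :=
    inv_nonneg.mpr (by linarith [(hr γ hγ).2])
  refine ⟨(1 - 2 ^ (-β))⁻¹ + (1 - 2 ^ (-α))⁻¹, add_nonneg (hK β hβ) (hK α hα), fun d hd => ?_⟩
  obtain ⟨m, hm_le, hm_lt⟩ := exists_mem_Ico_zpow (inv_pos.mpr hd) one_lt_two
  have hm_lo : 1 < 2 ^ (m + 1) * d := by rwa [inv_lt_iff_one_lt_mul₀ hd] at hm_lt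
  have hm_hi : 2 ^ m * d ≤ 1 := by rwa [← one_div, le_div_iff₀ hd] at hm_le
  -- `2 ^ m ≤ 1 / d < 2 ^ (m + 1)`: use `f ≤ t ^ (-β)` on the scales above `m` and
  -- `f ≤ t ^ α` on the others.
  have hsplit : ∑' j : ℤ, ENNReal.ofReal (f (2 ^ j * d))
      = ∑' n : ℕ, ENNReal.ofReal (f (2 ^ (n + (m + 1)) * d))
        + ∑' n : ℕ, ENNReal.ofReal (f (2 ^ (-(n + 1) + (m + 1)) * d)) := by
    rw [← (Equiv.addRight (m + 1)).tsum_eq,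
      tsum_of_nat_of_neg_add_one ENNReal.summable ENNReal.summable]
    rfl
  have hlarge (n : ℕ) : f (2 ^ (n + (m + 1)) * d) ≤ ((2 : ℝ) ^ (-β)) ^ n := by
    refine (hf_inf _ (by positivity)).trans (rpow_neg_le_of_two_pow_le hβ.le ?_)
    rw [zpow_add₀ two_ne_zero, zpow_natCast, mul_assoc]
    exact le_mul_of_one_le_right (by positivity) hm_lo.le
  have hsmall (n : ℕ) : f (2 ^ (-(n + 1) + (m + 1)) * d) ≤ ((2 : ℝ) ^ (-α)) ^ n := by
    have ht : 0 < (2 : ℝ) ^ (-(n + 1) + (m + 1)) * d := by positivity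
    refine (hf₀ _ ht).trans ?_
    rw [← inv_inv ((2 : ℝ) ^ (-(n + 1) + (m + 1)) * d), inv_rpow (inv_pos.mpr ht).le, ← rpow_neg
      (inv_pos.mpr ht).le]
    refine rpow_neg_le_of_two_pow_le hα.le ?_
    rw [le_inv_comm₀ (by positivity) ht, show -((n : ℤ) + 1) + (m + 1) = -n + m by ring,
      zpow_add₀ two_ne_zero, zpow_neg, zpow_natCast, mul_assoc]
    exact mul_le_of_le_one_right (by positivity) hm_hi
  rw [hsplit, ENNReal.ofReal_add (hK β hβ) (hK α hα)]
  exact add_le_add (tsum_ofReal_le_of_le_geometric (hr β hβ).1 (hr β hβ).2 hlarge)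
    (tsum_ofReal_le_of_le_geometric (hr α hα).1 (hr α hα).2 hsmall)

theorem exists_tsum_two_zpow_sq_mul_one_add_rpow_le {s : ℝ} (hs : 2 < s) :
    ∃ K, 0 ≤ K ∧ ∀ d, 0 < d →
      ∑' j : ℤ, ENNReal.ofReal (((2 : ℝ) ^ j) ^ 2 * (1 + 2 ^ j * d) ^ (-s))
        ≤ ENNReal.ofReal (K / d ^ 2) := by
  have hf₀ (t : ℝ) (ht : 0 < t) : t ^ 2 * (1 + t) ^ (-s) ≤ t ^ (2 : ℝ) := by
    rw [rpow_two]
    exact mul_le_of_le_one_right (by positivity)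
      (rpow_le_one_of_one_le_of_nonpos (by linarith) (by linarith))
  have hf_inf (t : ℝ) (ht : 0 < t) : t ^ 2 * (1 + t) ^ (-s) ≤ t ^ (-(s - 2)) := by
    calc t ^ 2 * (1 + t) ^ (-s) ≤ t ^ (2 : ℝ) * t ^ (-s) := by
          rw [rpow_two]
          exact mul_le_mul_of_nonneg_left
            (rpow_le_rpow_of_nonpos ht (by linarith) (by linarith)) (by positivity)
      _ = t ^ (-(s - 2)) := by rw [← rpow_add ht]; ring_nf
  obtain ⟨K, hK, hsum⟩ :=
    exists_tsum_ofReal_comp_two_zpow_mul_le two_pos (by linarith : 0 < s - 2) hf₀ hf_inf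
  refine ⟨K, hK, fun d hd => ?_⟩
  have hterm (j : ℤ) : ((2 : ℝ) ^ j) ^ 2 * (1 + 2 ^ j * d) ^ (-s)
      = (d ^ 2)⁻¹ * ((2 ^ j * d) ^ 2 * (1 + 2 ^ j * d) ^ (-s)) := by
    field_simp
  have hd₂ : (0 : ℝ) ≤ (d ^ 2)⁻¹ := by positivity
  simp_rw [hterm, ENNReal.ofReal_mul hd₂, ENNReal.tsum_mul_left, div_eq_inv_mul K,
    ENNReal.ofReal_mul hd₂]
  gcongr
  exact hsum d hd

theorem waveletDyadic_sq_le {ψ : ℝ → ℝ} {C r : ℝ} (hψ : ∀ x, |ψ x| ≤ C * (1 + |x|) ^ (-r))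
    (j k : ℤ) (t : ℝ) :
    waveletDyadic ψ j k t ^ 2 ≤ 2 ^ j * C ^ 2 * (1 + |2 ^ j * t - k|) ^ (-(2 * r)) := by
  set u : ℝ := 2 ^ j * t - k
  have hscale : ((2 : ℝ) ^ ((j : ℝ) / 2)) ^ 2 = 2 ^ j := by
    rw [← rpow_natCast, ← rpow_mul zero_le_two, Nat.cast_ofNat, div_mul_cancel₀ _ two_ne_zero,
      rpow_intCast]
  have hdecay : ψ u ^ 2 ≤ C ^ 2 * (1 + |u|) ^ (-(2 * r)) :=
    calc ψ u ^ 2 = |ψ u| ^ 2 := (sq_abs _).symm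
      _ ≤ (C * (1 + |u|) ^ (-r)) ^ 2 := pow_le_pow_left₀ (abs_nonneg _) (hψ u) 2
      _ = C ^ 2 * (1 + |u|) ^ (-(2 * r)) := by
          rw [mul_pow, ← rpow_natCast ((1 + |u|) ^ (-r)) 2, ← rpow_mul (by positivity)]
          ring_nf
  rw [waveletDyadic, mul_pow, hscale, mul_assoc]
  exact mul_le_mul_of_nonneg_left hdecay (by positivity)

theorem exists_tsum_waveletDyadic_sq_mul_sq_le {ψ : ℝ → ℝ} {C r : ℝ} (hr : 1 / 2 < r)
    (hψ : ∀ x, |ψ x| ≤ C * (1 + |x|) ^ (-r)) :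
    ∃ K, 0 ≤ K ∧ ∀ (j : ℤ) (x y : ℝ),
      ∑' k : ℤ, ENNReal.ofReal (waveletDyadic ψ j k x ^ 2 * waveletDyadic ψ j k y ^ 2)
        ≤ ENNReal.ofReal (K * (((2 : ℝ) ^ j) ^ 2 * (1 + 2 ^ j * |x - y|) ^ (-(2 * r)))) := by
  obtain ⟨K, hK, hlattice⟩ := exists_tsum_one_add_abs_sub_int_rpow_mul_le (by linarith : 1 < 2 * r)
  refine ⟨C ^ 4 * K, by positivity, fun j x y => ?_⟩
  have hA : 0 ≤ ((2 : ℝ) ^ j) ^ 2 * C ^ 4 := by positivity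
  have hdist : |2 ^ j * x - 2 ^ j * y| = (2 : ℝ) ^ j * |x - y| := by
    rw [← mul_sub, abs_mul, abs_of_pos (by positivity)]
  calc ∑' k : ℤ, ENNReal.ofReal (waveletDyadic ψ j k x ^ 2 * waveletDyadic ψ j k y ^ 2)
      ≤ ∑' k : ℤ, ENNReal.ofReal (((2 : ℝ) ^ j) ^ 2 * C ^ 4) * ENNReal.ofReal
          ((1 + |2 ^ j * x - k|) ^ (-(2 * r)) * (1 + |2 ^ j * y - k|) ^ (-(2 * r))) := by
        refine ENNReal.tsum_le_tsum fun k => ?_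
        rw [← ENNReal.ofReal_mul hA]
        refine ENNReal.ofReal_le_ofReal ?_
        calc waveletDyadic ψ j k x ^ 2 * waveletDyadic ψ j k y ^ 2
            ≤ (2 ^ j * C ^ 2 * (1 + |2 ^ j * x - k|) ^ (-(2 * r)))
              * (2 ^ j * C ^ 2 * (1 + |2 ^ j * y - k|) ^ (-(2 * r))) :=
              mul_le_mul (waveletDyadic_sq_le hψ j k x) (waveletDyadic_sq_le hψ j k y)
                (sq_nonneg _) (by positivity)
          _ = _ := by ring
    _ ≤ ENNReal.ofReal (((2 : ℝ) ^ j) ^ 2 * C ^ 4)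
          * ENNReal.ofReal (K * (1 + 2 ^ j * |x - y|) ^ (-(2 * r))) := by
        rw [ENNReal.tsum_mul_left, ← hdist]
        gcongr
        exact hlattice _ _
    _ = _ := by
        rw [← ENNReal.ofReal_mul hA]
        ring_nf

theorem dyadic_wavelet_squared_size_estimate_general
    (ψ : ℝ → ℝ) (C ε : ℝ) (hε : 0 < ε)
    (hψ : ∀ x : ℝ, |ψ x| ≤ C * (1 + |x|) ^ (-(1 + ε))) :
    ∃ C' : ℝ, 0 < C' ∧ ∀ x y : ℝ, x ≠ y →
      (∑' p : ℤ × ℤ,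
        ENNReal.ofReal ((waveletDyadic ψ p.1 p.2 x) ^ 2 * (waveletDyadic ψ p.1 p.2 y) ^ 2))
        ≤ ENNReal.ofReal (C' / |x - y| ^ 2) := by
  obtain ⟨K₁, hK₁, hscale⟩ := exists_tsum_waveletDyadic_sq_mul_sq_le (by linarith) hψ
  obtain ⟨K₂, hK₂, hscales⟩ :=
    exists_tsum_two_zpow_sq_mul_one_add_rpow_le (by linarith : 2 < 2 * (1 + ε))
  refine ⟨K₁ * K₂ + 1, by positivity, fun x y hxy => ?_⟩
  have hd : 0 < |x - y| := abs_pos.mpr (sub_ne_zero.mpr hxy)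
  calc (∑' p : ℤ × ℤ,
        ENNReal.ofReal ((waveletDyadic ψ p.1 p.2 x) ^ 2 * (waveletDyadic ψ p.1 p.2 y) ^ 2))
      = ∑' (j : ℤ) (k : ℤ),
          ENNReal.ofReal (waveletDyadic ψ j k x ^ 2 * waveletDyadic ψ j k y ^ 2) :=
        ENNReal.tsum_prod (f := fun j k =>
          ENNReal.ofReal (waveletDyadic ψ j k x ^ 2 * waveletDyadic ψ j k y ^ 2))
    _ ≤ ENNReal.ofReal K₁ * ∑' j : ℤ,
          ENNReal.ofReal (((2 : ℝ) ^ j) ^ 2 * (1 + 2 ^ j * |x - y|) ^ (-(2 * (1 + ε)))) := by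
        rw [← ENNReal.tsum_mul_left]
        refine ENNReal.tsum_le_tsum fun j => ?_
        rw [← ENNReal.ofReal_mul hK₁]
        exact hscale j x y
    _ ≤ ENNReal.ofReal (K₁ * (K₂ / |x - y| ^ 2)) := by
        rw [ENNReal.ofReal_mul hK₁]
        gcongr
        exact hscales _ hd
    _ ≤ ENNReal.ofReal ((K₁ * K₂ + 1) / |x - y| ^ 2) := by
        rw [← mul_div_assoc]
        gcongr
        linarith

/-- Squared size estimate: if `|ψ(x)| ≤ C (1+|x|)^{-1-ε}`, then
`Σ_{I ∈ 𝒟} |ψ_I(x)|² |ψ_I(y)|² ≤ C' / |x - y|²` for all `x ≠ y`. -/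
theorem dyadic_wavelet_squared_size_estimate
    (ψ : ℝ → ℝ) (C ε : ℝ) (hC : 0 < C) (hε : 0 < ε)
    (hψ : ∀ x : ℝ, |ψ x| ≤ C * (1 + |x|) ^ (-(1 + ε))) :
    ∃ C' : ℝ, 0 < C' ∧ ∀ x y : ℝ, x ≠ y →
      (∑' p : ℤ × ℤ,
        ENNReal.ofReal ((waveletDyadic ψ p.1 p.2 x) ^ 2 * (waveletDyadic ψ p.1 p.2 y) ^ 2))
        ≤ ENNReal.ofReal (C' / |x - y| ^ 2) :=
  dyadic_wavelet_squared_size_estimate_general ψ C ε hε hψ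
end

section
/- Let ψ satisfy |ψ(x)| ≤ C(1+|x|)^{−1−ε} and let {a_I : I ∈ 𝒟} be independent random variables on (Ω, ℱ, P), each subgaussian with a common variance factor ν > 0, with Σ_I E|a_I| < ∞. Then for every fixed x ≠ y in ℝ, the series Σ_{I ∈ 𝒟} a_I(ω) ψ_I(x) ψ_I(y) converges for P-almost every ω ∈ Ω. -/
/-!
Since `Σ_I E|a_I| < ∞`, almost surely `Σ_I |a_I(ω)| < ∞`. The decay of `ψ` gives
`|ψ(s) ψ(t)| ≤ C² / |s - t|`, an inequality invariant under the `L²`-normalised dyadic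
rescalings, so `|ψ_I(x) ψ_I(y)| ≤ C² / |x - y|` uniformly in `I`, and the series converges
absolutely by comparison.
-/

open MeasureTheory ProbabilityTheory Real

theorem ae_summable_norm_of_summable_integral_norm {α E ι : Type*} [MeasurableSpace α]
    [NormedAddCommGroup E] [Countable ι] {μ : Measure α} {f : ι → α → E}
    (hf : ∀ i, Integrable (f i) μ) (hsum : Summable fun i => ∫ a, ‖f i a‖ ∂μ) :
    ∀ᵐ a ∂μ, Summable fun i => ‖f i a‖ := by
  refine summable_norm_of_tsum_eLpNorm_ne_top le_rfl (fun i => (hf i).aestronglyMeasurable) ?_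
  have heq : ∀ i, eLpNorm (f i) 1 μ = ENNReal.ofReal (∫ a, ‖f i a‖ ∂μ) := fun i => by
    rw [eLpNorm_one_eq_lintegral_enorm, ofReal_integral_norm_eq_lintegral_enorm (hf i)]
  rw [tsum_congr heq, ← ENNReal.ofReal_tsum_of_nonneg
    (fun i => integral_nonneg fun a => norm_nonneg _) hsum]
  exact ENNReal.ofReal_ne_top

theorem rpow_neg_one_add_mul_le_inv_abs_sub {ε s t : ℝ} (hε : 0 ≤ ε) (hst : s ≠ t) :
    ((1 + |s|) * (1 + |t|)) ^ (-(1 + ε)) ≤ |s - t|⁻¹ := by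
  set u := (1 + |s|) * (1 + |t|)
  have hu : 1 ≤ u := one_le_mul_of_one_le_of_one_le (by simp) (by simp)
  have hsub : |s - t| ≤ u := by
    nlinarith [abs_sub s t, abs_nonneg s, abs_nonneg t, mul_nonneg (abs_nonneg s) (abs_nonneg t)]
  calc u ^ (-(1 + ε)) ≤ u ^ (-1 : ℝ) := rpow_le_rpow_of_exponent_le hu (by linarith)
    _ = u⁻¹ := rpow_neg_one u
    _ ≤ |s - t|⁻¹ := inv_anti₀ (abs_pos.mpr (sub_ne_zero.mpr hst)) hsub

theorem abs_mul_abs_le_div_abs_sub_of_decay {ψ : ℝ → ℝ} {C ε : ℝ} (hε : 0 ≤ ε)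
    (hψ : ∀ x, |ψ x| ≤ C * (1 + |x|) ^ (-(1 + ε))) {s t : ℝ} (hst : s ≠ t) :
    |ψ s| * |ψ t| ≤ C ^ 2 / |s - t| := by
  calc |ψ s| * |ψ t| ≤ (C * (1 + |s|) ^ (-(1 + ε))) * (C * (1 + |t|) ^ (-(1 + ε))) :=
        mul_le_mul (hψ s) (hψ t) (abs_nonneg _) ((abs_nonneg _).trans (hψ s))
    _ = C ^ 2 * ((1 + |s|) * (1 + |t|)) ^ (-(1 + ε)) := by
        rw [mul_rpow (by positivity) (by positivity)]; ring
    _ ≤ C ^ 2 * |s - t|⁻¹ := by gcongr; exact rpow_neg_one_add_mul_le_inv_abs_sub hε hst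
    _ = C ^ 2 / |s - t| := rfl

theorem abs_waveletDyadic_mul_le {ψ : ℝ → ℝ} {K : ℝ}
    (hψ : ∀ s t, s ≠ t → |ψ s| * |ψ t| ≤ K / |s - t|) (j k : ℤ) {x y : ℝ} (hxy : x ≠ y) :
    |waveletDyadic ψ j k x| * |waveletDyadic ψ j k y| ≤ K / |x - y| := by
  set p : ℝ := (2 : ℝ) ^ j
  have hp : 0 < p := zpow_pos two_pos j
  have hsqrt : (2 : ℝ) ^ ((j : ℝ) / 2) * (2 : ℝ) ^ ((j : ℝ) / 2) = p := by
    rw [← rpow_add two_pos, add_halves, rpow_intCast]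
  have hdiff : |(p * x - k) - (p * y - k)| = p * |x - y| := by
    rw [show (p * x - k) - (p * y - k) = p * (x - y) by ring, abs_mul, abs_of_pos hp]
  have hscaled := hψ (p * x - k) (p * y - k) (by simpa [hp.ne'] using hxy)
  rw [hdiff] at hscaled
  calc |waveletDyadic ψ j k x| * |waveletDyadic ψ j k y|
        = ((2 : ℝ) ^ ((j : ℝ) / 2) * (2 : ℝ) ^ ((j : ℝ) / 2)) *
            (|ψ (p * x - k)| * |ψ (p * y - k)|) := by
        simp only [waveletDyadic, abs_mul, abs_of_pos (rpow_pos_of_pos two_pos ((j : ℝ) / 2))]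
        ring
    _ = p * (|ψ (p * x - k)| * |ψ (p * y - k)|) := by rw [hsqrt]
    _ ≤ p * (K / (p * |x - y|)) := by gcongr
    _ = K / |x - y| := by field_simp

theorem random_wavelet_series_ae_convergence_general
    {Ω : Type*} [MeasureSpace Ω]
    (ψ : ℝ → ℝ) (C ε : ℝ) (hε : 0 < ε)
    (hψ : ∀ x : ℝ, |ψ x| ≤ C * (1 + |x|) ^ (-(1 + ε)))
    (a : ℤ × ℤ → Ω → ℝ)
    (hint : ∀ I, Integrable (a I) ℙ)
    (habs : Summable (fun I => ∫ ω, |a I ω| ∂ℙ)) :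
    ∀ x y : ℝ, x ≠ y →
      ∀ᵐ ω ∂ℙ, Summable (fun I : ℤ × ℤ =>
        a I ω * waveletDyadic ψ I.1 I.2 x * waveletDyadic ψ I.1 I.2 y) := by
  intro x y hxy
  have hwavelet (I : ℤ × ℤ) :
      |waveletDyadic ψ I.1 I.2 x| * |waveletDyadic ψ I.1 I.2 y| ≤ C ^ 2 / |x - y| :=
    abs_waveletDyadic_mul_le (fun s t hst => abs_mul_abs_le_div_abs_sub_of_decay hε.le hψ hst)
      I.1 I.2 hxy
  filter_upwards [ae_summable_norm_of_summable_integral_norm hint habs] with ω hω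
  refine Summable.of_norm_bounded (hω.mul_right (C ^ 2 / |x - y|)) fun I => ?_
  rw [norm_mul, norm_mul, mul_assoc]
  exact mul_le_mul_of_nonneg_left (hwavelet I) (norm_nonneg _)

/-- Almost sure convergence of `Σ_I a_I(ω) ψ_I(x) ψ_I(y)` for `x ≠ y`, when the `a_I`
are independent, uniformly subgaussian with variance factor `ν`, and `Σ_I E|a_I| < ∞`. -/
theorem random_wavelet_series_ae_convergence
    {Ω : Type*} [MeasureSpace Ω] [IsProbabilityMeasure (ℙ : Measure Ω)]
    (ψ : ℝ → ℝ) (C ε : ℝ) (hC : 0 < C) (hε : 0 < ε)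
    (hψ : ∀ x : ℝ, |ψ x| ≤ C * (1 + |x|) ^ (-(1 + ε)))
    (a : ℤ × ℤ → Ω → ℝ) (ν : ℝ) (hν : 0 < ν)
    (hind : iIndepFun a ℙ)
    (hint : ∀ I, Integrable (a I) ℙ)
    (habs : Summable (fun I => ∫ ω, |a I ω| ∂ℙ))
    (hmgf : ∀ I, ∀ l : ℝ,
      Integrable (fun ω => exp (l * (a I ω - ∫ x, a I x ∂ℙ))) ℙ)
    (hsub : ∀ I, ∀ l : ℝ,
      log (∫ ω, exp (l * (a I ω - ∫ x, a I x ∂ℙ)) ∂ℙ) ≤ l ^ 2 * ν / 2) :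
    ∀ x y : ℝ, x ≠ y →
      ∀ᵐ ω ∂ℙ, Summable (fun I : ℤ × ℤ =>
        a I ω * waveletDyadic ψ I.1 I.2 x * waveletDyadic ψ I.1 I.2 y) :=
  random_wavelet_series_ae_convergence_general ψ C ε hε hψ a hint habs
end
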